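/- The set of bi-leveled trees on n internal nodes, ordered by (s;S) ≤ (t;T) iff s ≤ t in the Tamari lattice and T ⊆ S, is a lattice. -/

import Mathlib

/-!
Encode a planar binary tree by the sizes `L(i)` of the left subtrees of its nodes, listed in
in-order. A rotation only shrinks left subtrees, and conversely, thanks to the nesting of left
subtrees, one can always rotate towards any tree with a pointwise smaller vector; hence `s ≤ t`
in the Tamari order iff `L_t ≤ L_s`, and the tree realising the pointwise minimum of two
vectors is their Tamari join `u`.

The nodes below `j` are exactly the in-order indices in `[j - L(j), j + R(j)]`. Going up in the
Tamari order left subtrees shrink and right subtrees grow, so an ancestor lying to the right of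
a node stays an ancestor further down, and one lying to the left stays an ancestor further up.
Consequently the join of `(s;S)` and `(t;T)` is `u` marked by the largest admissible level of
`u` inside `S ∩ T`. Since there are finitely many bi-leveled trees and the left comb with all
nodes marked lies below all of them, meets exist as well.
-/

/-- Planar rooted binary trees. -/
inductive PBT : Type
  | leaf : PBT
  | node : PBT → PBT → PBT
deriving DecidableEq

namespace PBT

/-- Number of internal nodes. -/
def numNodes : PBT → ℕ
  | leaf => 0
  | node l r => numNodes l + numNodes r + 1

/-- Number of leaves. -/
def numLeaves : PBT → ℕ
  | leaf => 1
  | node l r => numLeaves l + numLeaves r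

/-- A single left-to-right (Tamari) rotation somewhere in a tree. -/
inductive Rot : PBT → PBT → Prop
  | here (a b c : PBT) : Rot (node (node a b) c) (node a (node b c))
  | left {l l' : PBT} (r : PBT) : Rot l l' → Rot (node l r) (node l' r)
  | right (l : PBT) {r r' : PBT} : Rot r r' → Rot (node l r) (node l r')

/-- The Tamari order: reflexive-transitive closure of rotations. -/
def tamariLE : PBT → PBT → Prop := Relation.ReflTransGen Rot

/-- Positions of internal nodes as paths from the root
(`false` = go left, `true` = go right). -/
def isNode : PBT → List Bool → Prop
  | leaf, _ => False
  | node _ _, [] => True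
  | node l _, (false :: p) => isNode l p
  | node _ r, (true :: p) => isNode r p

/-- 1-based left-to-right (in-order) index of a node position. -/
def idx : PBT → List Bool → ℕ
  | leaf, _ => 0
  | node l _, [] => numNodes l + 1
  | node l _, (false :: p) => idx l p
  | node l r, (true :: p) => numNodes l + 1 + idx r p

/-- `nodeLE t i j` : in the node poset of `t` (root maximal, a node is below all
of its ancestors), the node with in-order index `i` is ≤ the node with index `j`
(i.e. the position of `j` is a prefix of the position of `i`). -/
def nodeLE (t : PBT) (i j : ℕ) : Prop :=
  ∃ p q : List Bool, isNode t p ∧ isNode t q ∧ idx t p = i ∧ idx t q = j ∧ q <+: p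

end PBT

/-- Bi-leveled trees with `n` internal nodes: a planar binary tree together with
an upper order ideal `T` of its node poset (nodes indexed `1,…,n` left to right)
containing the leftmost node (index 1) as a minimal element. -/
structure BLT (n : ℕ) where
  t : PBT
  hn : t.numNodes = n
  T : Set ℕ
  hsub : T ⊆ Set.Icc 1 n
  hideal : ∀ i j, PBT.nodeLE t i j → i ∈ T → j ∈ T
  hone : (1 : ℕ) ∈ T
  hmin : ∀ i ∈ T, PBT.nodeLE t i 1 → i = 1

/-- The partial order on bi-leveled trees: `(s;S) ≤ (t;T)` iff `s ≤ t` in the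
Tamari order and `T ⊆ S`. -/
instance BLT.instPreorder (n : ℕ) : Preorder (BLT n) where
  le x y := PBT.tamariLE x.t y.t ∧ y.T ⊆ x.T
  le_refl x := ⟨Relation.ReflTransGen.refl, le_refl _⟩
  le_trans x y z h h' := ⟨h.1.trans h'.1, h'.2.trans h.2⟩

/-- Trees with `n` internal nodes, as a preorder under the Tamari order. -/
instance Yn.instPreorder (n : ℕ) : Preorder {t : PBT // t.numNodes = n} where
  le x y := PBT.tamariLE x.1 y.1
  le_refl x := Relation.ReflTransGen.refl
  le_trans x y z h h' := Relation.ReflTransGen.trans h h'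

namespace PBT

/-- Size of the left subtree of the node with in-order index `i` (indices start at 1,
as for `idx`; out-of-range indices give 0). -/
def leftSize : PBT → ℕ → ℕ
  | leaf, _ => 0
  | node l r, i =>
    if i ≤ l.numNodes then leftSize l i
    else if i = l.numNodes + 1 then l.numNodes
    else leftSize r (i - l.numNodes - 1)

def rightSize : PBT → ℕ → ℕ
  | leaf, _ => 0
  | node l r, i =>
    if i ≤ l.numNodes then rightSize l i
    else if i = l.numNodes + 1 then r.numNodes
    else rightSize r (i - l.numNodes - 1)

def leftWeight : PBT → ℕ
  | leaf => 0
  | node l r => leftWeight l + leftWeight r + numNodes l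

section Sizes

variable {l r t : PBT} {i j : ℕ}

theorem leftSize_node_of_le (h : i ≤ l.numNodes) : leftSize (node l r) i = leftSize l i := by
  simp [leftSize, h]

theorem leftSize_node_root (l r : PBT) : leftSize (node l r) (l.numNodes + 1) = l.numNodes := by
  simp [leftSize]

theorem leftSize_node_of_lt (h : l.numNodes + 1 < i) :
    leftSize (node l r) i = leftSize r (i - l.numNodes - 1) := by
  rw [leftSize, if_neg (by omega), if_neg (by omega)]

theorem rightSize_node_of_le (h : i ≤ l.numNodes) : rightSize (node l r) i = rightSize l i := by
  simp [rightSize, h]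

theorem rightSize_node_root (l r : PBT) : rightSize (node l r) (l.numNodes + 1) = r.numNodes := by
  simp [rightSize]

theorem rightSize_node_of_lt (h : l.numNodes + 1 < i) :
    rightSize (node l r) i = rightSize r (i - l.numNodes - 1) := by
  rw [rightSize, if_neg (by omega), if_neg (by omega)]

@[simp]
theorem leftSize_zero (t : PBT) : leftSize t 0 = 0 := by
  induction t with
  | leaf => rfl
  | node l r ihl _ => simp [leftSize, ihl]

theorem leftSize_lt (hi : 1 ≤ i) : leftSize t i < i := by
  induction t generalizing i with
  | leaf => simp only [leftSize]; omega
  | node l r ihl ihr =>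
    rcases lt_trichotomy i (l.numNodes + 1) with h | rfl | h
    · rw [leftSize_node_of_le (by omega)]; exact ihl hi
    · rw [leftSize_node_root]; omega
    · rw [leftSize_node_of_lt h]; have := ihr (i := i - l.numNodes - 1) (by omega); omega

theorem leftSize_of_numNodes_lt (hi : t.numNodes < i) : leftSize t i = 0 := by
  induction t generalizing i with
  | leaf => rfl
  | node l r _ ihr =>
    simp only [numNodes] at hi
    rw [leftSize_node_of_lt (by omega)]
    exact ihr (by omega)

theorem add_rightSize_le (hi : 1 ≤ i) (hn : i ≤ t.numNodes) :
    i + rightSize t i ≤ t.numNodes := by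
  induction t generalizing i with
  | leaf => simp [numNodes] at hn; omega
  | node l r ihl ihr =>
    simp only [numNodes] at hn ⊢
    rcases lt_trichotomy i (l.numNodes + 1) with h | rfl | h
    · rw [rightSize_node_of_le (by omega)]; have := ihl hi (by omega); omega
    · rw [rightSize_node_root]; omega
    · rw [rightSize_node_of_lt h]
      have := ihr (i := i - l.numNodes - 1) (by omega) (by omega); omega

/-- If `j` lies in the left subtree of `i`, the left subtree of `j` does too. -/
theorem leftSize_nested (hj : 1 ≤ j) (hji : j < i) (hin : i ≤ j + leftSize t i) :
    i + leftSize t j ≤ j + leftSize t i := by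
  induction t generalizing i j with
  | leaf => simp [leftSize] at hin ⊢; omega
  | node l r ihl ihr =>
    rcases lt_trichotomy i (l.numNodes + 1) with hc | rfl | hc
    · rw [leftSize_node_of_le (by omega)] at hin ⊢
      rw [leftSize_node_of_le (by omega)]
      exact ihl hj hji hin
    · rw [leftSize_node_root, leftSize_node_of_le (by omega)]
      have := leftSize_lt (t := l) hj
      omega
    · rw [leftSize_node_of_lt hc] at hin ⊢
      have hri := leftSize_lt (t := r) (i := i - l.numNodes - 1)
      rcases lt_or_ge (l.numNodes + 1) j with hj' | hj'
      · rw [leftSize_node_of_lt hj']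
        have := ihr (i := i - l.numNodes - 1) (j := j - l.numNodes - 1)
          (by omega) (by omega) (by omega)
        omega
      · omega

theorem eq_of_leftSize_eq {s t : PBT} (hn : s.numNodes = t.numNodes)
    (h : ∀ i, leftSize s i = leftSize t i) : s = t := by
  induction s generalizing t with
  | leaf => cases t <;> simp_all [numNodes]
  | node l r ihl ihr =>
    cases t with
    | leaf => simp [numNodes] at hn
    | node l' r' =>
      simp only [numNodes] at hn
      have hll : l.numNodes = l'.numNodes := by
        by_contra hne
        rcases Nat.lt_or_gt_of_ne hne with hlt | hlt
        · have h1 := h (l'.numNodes + 1)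
          have := leftSize_lt (t := r) (i := l'.numNodes - l.numNodes)
          rw [leftSize_node_of_lt (by omega), leftSize_node_root,
            show l'.numNodes + 1 - l.numNodes - 1 = l'.numNodes - l.numNodes by omega] at h1
          omega
        · have h1 := h (l.numNodes + 1)
          have := leftSize_lt (t := r') (i := l.numNodes - l'.numNodes)
          rw [leftSize_node_root, leftSize_node_of_lt (by omega),
            show l.numNodes + 1 - l'.numNodes - 1 = l.numNodes - l'.numNodes by omega] at h1
          omega
      have hl : l = l' := ihl hll fun i => by
        rcases le_or_gt i l.numNodes with hi | hi
        · simpa only [leftSize_node_of_le hi, leftSize_node_of_le (hll ▸ hi)] using h i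
        · rw [leftSize_of_numNodes_lt hi, leftSize_of_numNodes_lt (hll ▸ hi)]
      have hr : r = r' := ihr (by omega) fun i => by
        rcases Nat.eq_zero_or_pos i with rfl | hi
        · simp
        · have hi' := h (i + l.numNodes + 1)
          rwa [leftSize_node_of_lt (by omega), leftSize_node_of_lt (by omega),
            show i + l.numNodes + 1 - l.numNodes - 1 = i by omega,
            show i + l.numNodes + 1 - l'.numNodes - 1 = i by omega] at hi'
      rw [hl, hr]

end Sizes

section Rotations

theorem leftSize_rot_here (a b c : PBT) :
    leftSize (node a (node b c)) ((node a b).numNodes + 1) = b.numNodes := by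
  rw [leftSize_node_of_lt (by simp only [numNodes]; omega),
    show (node a b).numNodes + 1 - a.numNodes - 1 = b.numNodes + 1 by simp only [numNodes]; omega,
    leftSize_node_root]

theorem leftSize_rot_here_of_ne (a b c : PBT) {j : ℕ} (hj : j ≠ (node a b).numNodes + 1) :
    leftSize (node a (node b c)) j = leftSize (node (node a b) c) j := by
  simp only [numNodes] at hj
  simp only [leftSize, numNodes]
  rw [show j - a.numNodes - 1 - b.numNodes - 1 = j - (a.numNodes + b.numNodes + 1) - 1 by omega]
  split_ifs <;> (try simp only [*, ↓reduceIte]) <;> omega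

variable {s t : PBT}

theorem Rot.numNodes_eq (h : Rot s t) : s.numNodes = t.numNodes := by
  induction h <;> simp only [numNodes] <;> omega

theorem Rot.leftWeight_lt (h : Rot s t) : leftWeight t < leftWeight s := by
  induction h with
  | here a b c => simp only [leftWeight, numNodes]; omega
  | left r h ih => have := h.numNodes_eq; simp only [leftWeight]; omega
  | right l h ih => simp only [leftWeight]; omega

theorem Rot.leftSize_le (h : Rot s t) (i : ℕ) : leftSize t i ≤ leftSize s i := by
  induction h generalizing i with
  | here a b c =>
    by_cases hi : i = (node a b).numNodes + 1
    · rw [hi, leftSize_rot_here, leftSize_node_root]; simp only [numNodes]; omega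
    · rw [leftSize_rot_here_of_ne a b c hi]
  | left r h ih =>
    have := ih i
    simp only [leftSize, h.numNodes_eq]
    split_ifs <;> omega
  | right l h ih =>
    have := ih (i - l.numNodes - 1)
    simp only [leftSize]
    split_ifs <;> omega

theorem Rot.rightSize_le (h : Rot s t) (i : ℕ) : rightSize s i ≤ rightSize t i := by
  induction h generalizing i with
  | here a b c =>
    simp only [rightSize, numNodes]
    rw [show i - a.numNodes - 1 - b.numNodes - 1 = i - (a.numNodes + b.numNodes + 1) - 1 by omega]
    split_ifs <;> grind
  | left r h ih =>
    have := ih i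
    simp only [rightSize, h.numNodes_eq]
    split_ifs <;> omega
  | right l h ih =>
    have := ih (i - l.numNodes - 1)
    simp only [rightSize, h.numNodes_eq]
    split_ifs <;> omega

theorem tamariLE.numNodes_eq (h : tamariLE s t) : s.numNodes = t.numNodes := by
  induction h with
  | refl => rfl
  | tail _ h ih => exact ih.trans h.numNodes_eq

theorem tamariLE.leftSize_le (h : tamariLE s t) (i : ℕ) : leftSize t i ≤ leftSize s i := by
  induction h with
  | refl => exact le_rfl
  | tail _ h ih => exact (h.leftSize_le i).trans ih

theorem tamariLE.rightSize_le (h : tamariLE s t) (i : ℕ) : rightSize s i ≤ rightSize t i := by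
  induction h with
  | refl => exact le_rfl
  | tail _ h ih => exact ih.trans (h.rightSize_le i)

/-- Rotating at node `i` shrinks its left subtree to the right subtree of its left child;
`hnest`, applied to that child, keeps the new size at least `c`. -/
theorem exists_rot_leftSize_ge (s : PBT) {i c : ℕ} (hc : c < leftSize s i)
    (hnest : ∀ j, 1 ≤ j → j < i → i ≤ j + c → i + leftSize s j ≤ j + c) :
    ∃ s', Rot s s' ∧ c ≤ leftSize s' i ∧ ∀ j ≠ i, leftSize s' j = leftSize s j := by
  induction s generalizing i with
  | leaf => simp [leftSize] at hc
  | node l r ihl ihr =>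
    rcases lt_trichotomy i (l.numNodes + 1) with hi | rfl | hi
    · rw [leftSize_node_of_le (by omega)] at hc
      obtain ⟨l', hrot, hge, hother⟩ := ihl hc fun j hj hji hjc => by
        simpa only [leftSize_node_of_le (show j ≤ l.numNodes by omega)] using hnest j hj hji hjc
      have hnn := hrot.numNodes_eq
      refine ⟨node l' r, hrot.left r, by rwa [leftSize_node_of_le (by omega)], fun j hj => ?_⟩
      simp only [leftSize, hnn]
      split_ifs <;> first | exact hother j hj | rfl
    · rw [leftSize_node_root] at hc
      obtain ⟨a, b, rfl⟩ : ∃ a b, l = node a b := by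
        cases l with
        | leaf => simp [numNodes] at hc
        | node a b => exact ⟨a, b, rfl⟩
      have hcb : c ≤ b.numNodes := by
        by_contra! hlt
        have := hnest (a.numNodes + 1) (by omega) (by simp only [numNodes]; omega)
          (by simp only [numNodes]; omega)
        rw [leftSize_node_of_le (by simp only [numNodes]; omega), leftSize_node_root] at this
        simp only [numNodes] at hc this
        omega
      exact ⟨node a (node b r), Rot.here a b r, by rwa [leftSize_rot_here],
        fun j hj => leftSize_rot_here_of_ne a b r hj⟩
    · rw [leftSize_node_of_lt hi] at hc
      obtain ⟨r', hrot, hge, hother⟩ := ihr hc fun j hj hji hjc => by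
        have := hnest (j + l.numNodes + 1) (by omega) (by omega) (by omega)
        rw [leftSize_node_of_lt (by omega), show j + l.numNodes + 1 - l.numNodes - 1 = j by omega]
          at this
        omega
      refine ⟨node l r', hrot.right l, by rwa [leftSize_node_of_lt hi], fun j hj => ?_⟩
      rcases lt_trichotomy j (l.numNodes + 1) with hj' | rfl | hj'
      · rw [leftSize_node_of_le (by omega), leftSize_node_of_le (by omega)]
      · rw [leftSize_node_root, leftSize_node_root]
      · rw [leftSize_node_of_lt hj', leftSize_node_of_lt hj']
        exact hother _ (by omega)

theorem exists_rot_min_leftSize_eq (h : ∃ i, leftSize t i < leftSize s i) :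
    ∃ s', Rot s s' ∧
      ∀ k, min (leftSize s' k) (leftSize t k) = min (leftSize s k) (leftSize t k) := by
  classical
  -- rotate at the first index where `s` exceeds `t`: there the nesting of `t` applies to `s`
  have hi := Nat.find_spec h
  have hbefore : ∀ j < Nat.find h, leftSize s j ≤ leftSize t j := fun j hj =>
    not_lt.1 (Nat.find_min h hj)
  have hi1 : 1 ≤ Nat.find h := by
    by_contra! h0
    simp [Nat.lt_one_iff.1 h0] at hi
  obtain ⟨s', hrot, hge, hother⟩ := exists_rot_leftSize_ge s hi fun j hj hji hjc => by
    have := leftSize_nested hj hji hjc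
    have := hbefore j hji
    omega
  refine ⟨s', hrot, fun k => ?_⟩
  rcases eq_or_ne k (Nat.find h) with rfl | hk
  · have := hrot.leftSize_le (Nat.find h)
    omega
  · rw [hother k hk]

theorem exists_tamariLE_leftSize_eq_min (s t : PBT) :
    ∃ u, tamariLE s u ∧ ∀ k, leftSize u k = min (leftSize s k) (leftSize t k) := by
  induction s using (measure leftWeight).wf.induction with
  | _ s ih =>
  by_cases h : ∃ i, leftSize t i < leftSize s i
  · obtain ⟨s', hrot, hmin⟩ := exists_rot_min_leftSize_eq h
    obtain ⟨u, hsu, hu⟩ := ih s' hrot.leftWeight_lt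
    exact ⟨u, .head hrot hsu, fun k => (hu k).trans (hmin k)⟩
  · simp only [not_exists, not_lt] at h
    exact ⟨s, .refl, fun k => (min_eq_left (h k)).symm⟩

theorem tamariLE_iff_leftSize_le :
    tamariLE s t ↔ s.numNodes = t.numNodes ∧ ∀ i, leftSize t i ≤ leftSize s i := by
  refine ⟨fun h => ⟨h.numNodes_eq, h.leftSize_le⟩, fun ⟨hn, hle⟩ => ?_⟩
  obtain ⟨u, hsu, hu⟩ := exists_tamariLE_leftSize_eq_min s t
  have hut : u = t := eq_of_leftSize_eq (hsu.numNodes_eq.symm.trans hn) fun i => by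
    rw [hu, min_eq_right (hle i)]
  exact hut ▸ hsu

theorem exists_tamari_join (hn : s.numNodes = t.numNodes) :
    ∃ u, tamariLE s u ∧ tamariLE t u ∧
      ∀ v, tamariLE s v → tamariLE t v → tamariLE u v := by
  obtain ⟨u, hsu, hu⟩ := exists_tamariLE_leftSize_eq_min s t
  refine ⟨u, hsu, tamariLE_iff_leftSize_le.2 ⟨hn.symm.trans hsu.numNodes_eq, fun i => ?_⟩,
    fun v hsv htv => tamariLE_iff_leftSize_le.2 ⟨hsu.numNodes_eq.symm.trans hsv.numNodes_eq,
      fun i => ?_⟩⟩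
  · rw [hu]; exact min_le_right _ _
  · rw [hu]; exact le_min (hsv.leftSize_le i) (htv.leftSize_le i)

end Rotations

def leftComb : ℕ → PBT
  | 0 => leaf
  | n + 1 => node (leftComb n) leaf

@[simp]
theorem numNodes_leftComb (n : ℕ) : (leftComb n).numNodes = n := by
  induction n with
  | zero => rfl
  | succ n ih => simp [leftComb, numNodes, ih]

theorem leftSize_leftComb {n i : ℕ} (h1 : 1 ≤ i) (h2 : i ≤ n) :
    leftSize (leftComb n) i = i - 1 := by
  induction n with
  | zero => omega
  | succ n ih =>
    rcases le_or_gt i n with h | h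
    · rw [leftComb, leftSize_node_of_le (by simpa using h)]
      exact ih h
    · obtain rfl : i = n + 1 := by omega
      rw [leftComb, show n + 1 = (leftComb n).numNodes + 1 by simp, leftSize_node_root]
      simp

theorem rightSize_leftComb (n i : ℕ) : rightSize (leftComb n) i = 0 := by
  induction n generalizing i with
  | zero => rfl
  | succ n ih =>
    simp only [leftComb, rightSize, numNodes_leftComb]
    split_ifs <;> simp [ih, numNodes]

theorem leftComb_tamariLE (t : PBT) : tamariLE (leftComb t.numNodes) t := by
  refine tamariLE_iff_leftSize_le.2 ⟨numNodes_leftComb _, fun i => ?_⟩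
  rcases Nat.eq_zero_or_pos i with rfl | h
  · simp
  rcases le_or_gt i t.numNodes with h2 | h2
  · rw [leftSize_leftComb h h2]
    have := leftSize_lt (t := t) h
    omega
  · rw [leftSize_of_numNodes_lt h2]
    exact Nat.zero_le _

instance instFiniteNumNodesEq (n : ℕ) : Finite {t : PBT // t.numNodes = n} := by
  have hlt (t : PBT) (i : Fin (n + 1)) : leftSize t i < n + 1 := by
    rcases Nat.eq_zero_or_pos i with h | h
    · simp [h]
    · have := leftSize_lt (t := t) h
      omega
  refine Finite.of_injective
    (fun t (i : Fin (n + 1)) => (⟨leftSize t.1 i, hlt t.1 i⟩ : Fin (n + 1)))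
    fun s t h => Subtype.ext (eq_of_leftSize_eq (s.2.trans t.2.symm) fun i => ?_)
  rcases le_or_gt i n with hi | hi
  · exact congrArg Fin.val (congrFun h ⟨i, by omega⟩)
  · have := s.2
    have := t.2
    rw [leftSize_of_numNodes_lt (by omega), leftSize_of_numNodes_lt (by omega)]

section NodePoset

variable {t : PBT} {p q : List Bool} {i j : ℕ}

theorem idx_mem_Icc (h : isNode t p) : idx t p ∈ Set.Icc 1 t.numNodes := by
  induction t generalizing p with
  | leaf => cases p <;> simp [isNode] at h
  | node l r ihl ihr =>
    rcases p with _ | ⟨_ | _, p⟩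
    · simp only [idx, numNodes, Set.mem_Icc]; omega
    · have := ihl (p := p) h
      simp only [idx, numNodes, Set.mem_Icc] at this ⊢; omega
    · have := ihr (p := p) h
      simp only [idx, numNodes, Set.mem_Icc] at this ⊢; omega

theorem exists_isNode_idx_eq (h1 : 1 ≤ i) (h2 : i ≤ t.numNodes) :
    ∃ p, isNode t p ∧ idx t p = i := by
  induction t generalizing i with
  | leaf => simp [numNodes] at h2; omega
  | node l r ihl ihr =>
    simp only [numNodes] at h2
    rcases lt_trichotomy i (l.numNodes + 1) with h | rfl | h
    · obtain ⟨p, hp, hpi⟩ := ihl h1 (by omega)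
      exact ⟨false :: p, hp, hpi⟩
    · exact ⟨[], trivial, rfl⟩
    · obtain ⟨p, hp, hpi⟩ := ihr (i := i - l.numNodes - 1) (by omega) (by omega)
      refine ⟨true :: p, hp, ?_⟩
      simp only [idx, hpi]
      omega

theorem eq_of_idx_eq (hp : isNode t p) (hq : isNode t q) (h : idx t p = idx t q) : p = q := by
  induction t generalizing p q with
  | leaf => cases p <;> simp [isNode] at hp
  | node l r ihl ihr =>
    rcases p with _ | ⟨_ | _, p⟩ <;> rcases q with _ | ⟨_ | _, q⟩ <;>
      simp only [isNode] at hp hq <;> simp only [idx] at h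
    · rfl
    all_goals first
      | rw [ihl hp hq h]
      | rw [ihr hp hq (by omega)]
      | have := idx_mem_Icc hp; simp only [Set.mem_Icc] at this; omega
      | have := idx_mem_Icc hq; simp only [Set.mem_Icc] at this; omega

theorem idx_bounds_of_prefix (hp : isNode t p) (hq : isNode t q) (hqp : q <+: p) :
    idx t q ≤ idx t p + leftSize t (idx t q) ∧ idx t p ≤ idx t q + rightSize t (idx t q) := by
  induction t generalizing p q with
  | leaf => cases p <;> simp [isNode] at hp
  | node l r ihl ihr =>
    rcases q with _ | ⟨b, q⟩
    · have := idx_mem_Icc hp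
      simp only [idx, leftSize_node_root, rightSize_node_root, numNodes, Set.mem_Icc] at this ⊢
      omega
    rcases p with _ | ⟨b', p⟩
    · simp at hqp
    obtain ⟨rfl, hqp'⟩ := List.cons_prefix_cons.1 hqp
    cases b <;> simp only [isNode] at hp hq <;> simp only [idx]
    · have := (idx_mem_Icc hq).2
      rw [leftSize_node_of_le this, rightSize_node_of_le this]
      exact ihl hp hq hqp'
    · have := (idx_mem_Icc hq).1
      have := ihr hp hq hqp'
      rw [leftSize_node_of_lt (by omega), rightSize_node_of_lt (by omega),
        show l.numNodes + 1 + idx r q - l.numNodes - 1 = idx r q by omega]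
      omega

theorem nodeLE_iff : nodeLE t i j ↔ i ∈ Set.Icc 1 t.numNodes ∧ j ∈ Set.Icc 1 t.numNodes ∧
    j ≤ i + leftSize t j ∧ i ≤ j + rightSize t j := by
  constructor
  · rintro ⟨p, q, hp, hq, rfl, rfl, hqp⟩
    exact ⟨idx_mem_Icc hp, idx_mem_Icc hq, idx_bounds_of_prefix hp hq hqp⟩
  rintro ⟨⟨hi1, hi2⟩, ⟨hj1, hj2⟩, hl, hr⟩
  induction t generalizing i j with
  | leaf => simp [numNodes] at hi2; omega
  | node l r ihl ihr =>
    simp only [numNodes] at hi2 hj2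
    rcases lt_trichotomy j (l.numNodes + 1) with h | rfl | h
    · rw [leftSize_node_of_le (by omega)] at hl
      rw [rightSize_node_of_le (by omega)] at hr
      have := add_rightSize_le (t := l) hj1 (by omega)
      obtain ⟨p, q, hp, hq, hip, hjq, hqp⟩ := ihl hi1 (by omega) hj1 (by omega) hl hr
      exact ⟨false :: p, false :: q, hp, hq, hip, hjq, List.cons_prefix_cons.2 ⟨rfl, hqp⟩⟩
    · obtain ⟨p, hp, hip⟩ :=
        exists_isNode_idx_eq (t := node l r) hi1 (by simp only [numNodes]; omega)
      exact ⟨p, [], hp, trivial, hip, rfl, List.nil_prefix⟩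
    · rw [leftSize_node_of_lt h] at hl
      rw [rightSize_node_of_lt h] at hr
      have := leftSize_lt (t := r) (i := j - l.numNodes - 1) (by omega)
      obtain ⟨p, q, hp, hq, hip, hjq, hqp⟩ := ihr (i := i - l.numNodes - 1)
        (j := j - l.numNodes - 1) (by omega) (by omega) (by omega) (by omega) (by omega) (by omega)
      refine ⟨true :: p, true :: q, hp, hq, ?_, ?_, List.cons_prefix_cons.2 ⟨rfl, hqp⟩⟩
      · simp only [idx, hip]; omega
      · simp only [idx, hjq]; omega

theorem nodeLE_refl (hi : i ∈ Set.Icc 1 t.numNodes) : nodeLE t i i :=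
  nodeLE_iff.2 ⟨hi, hi, by omega, by omega⟩

theorem nodeLE_trans {k : ℕ} (hij : nodeLE t i j) (hjk : nodeLE t j k) : nodeLE t i k := by
  obtain ⟨p, q, hp, hq, rfl, rfl, hqp⟩ := hij
  obtain ⟨q', r, hq', hr, hq'q, rfl, hrq'⟩ := hjk
  obtain rfl := eq_of_idx_eq hq' hq hq'q
  exact ⟨p, r, hp, hr, rfl, rfl, hrq'.trans hqp⟩

theorem nodeLE_antisymm (hij : nodeLE t i j) (hji : nodeLE t j i) : i = j := by
  obtain ⟨p, q, hp, hq, rfl, rfl, hqp⟩ := hij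
  obtain ⟨q', p', hq', hp', hq'q, hp'p, hp'q'⟩ := hji
  obtain rfl := eq_of_idx_eq hq' hq hq'q
  obtain rfl := eq_of_idx_eq hp' hp hp'p
  rw [hqp.eq_of_length (le_antisymm hqp.length_le hp'q'.length_le)]

theorem nodeLE_of_tamariLE_of_le {s u : PBT} (hsu : tamariLE s u) (h : nodeLE u i j)
    (hij : i ≤ j) : nodeLE s i j := by
  obtain ⟨hi, hj, hl, -⟩ := nodeLE_iff.1 h
  have := hsu.leftSize_le j
  rw [← hsu.numNodes_eq] at hi hj
  exact nodeLE_iff.2 ⟨hi, hj, by omega, by omega⟩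

theorem nodeLE_of_tamariLE_of_ge {u v : PBT} (huv : tamariLE u v) (h : nodeLE u i j)
    (hji : j ≤ i) : nodeLE v i j := by
  obtain ⟨hi, hj, -, hr⟩ := nodeLE_iff.1 h
  have := huv.rightSize_le j
  rw [huv.numNodes_eq] at hi hj
  exact nodeLE_iff.2 ⟨hi, hj, by omega, by omega⟩

end NodePoset

def IsUpClosed (t : PBT) (W : Set ℕ) : Prop :=
  ∀ i j, nodeLE t i j → i ∈ W → j ∈ W

/-- The admissible second components `T` of a bi-leveled tree `(t;T)`. -/
structure IsLevel (t : PBT) (W : Set ℕ) : Prop where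
  subset_Icc : W ⊆ Set.Icc 1 t.numNodes
  isUpClosed : IsUpClosed t W
  one_mem : 1 ∈ W
  eq_one_of_nodeLE_one : ∀ i ∈ W, nodeLE t i 1 → i = 1

def upClosure (t : PBT) (V : Set ℕ) : Set ℕ :=
  {j | ∃ i ∈ V, nodeLE t i j}

section Levels

variable {s t u v : PBT} {S V : Set ℕ}

theorem IsLevel.sUnion {𝒲 : Set (Set ℕ)} (hne : 𝒲.Nonempty)
    (h : ∀ W ∈ 𝒲, IsLevel t W) : IsLevel t (⋃₀ 𝒲) where
  subset_Icc := Set.sUnion_subset fun W hW => (h W hW).subset_Icc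
  isUpClosed := fun i j hij ⟨W, hW, hi⟩ => ⟨W, hW, (h W hW).isUpClosed i j hij hi⟩
  one_mem := let ⟨W, hW⟩ := hne; ⟨W, hW, (h W hW).one_mem⟩
  eq_one_of_nodeLE_one := fun i ⟨W, hW, hi⟩ => (h W hW).eq_one_of_nodeLE_one i hi

theorem subset_upClosure (hV : V ⊆ Set.Icc 1 t.numNodes) : V ⊆ upClosure t V :=
  fun i hi => ⟨i, hi, nodeLE_refl (hV hi)⟩

theorem isLevel_upClosure (hV : V ⊆ Set.Icc 1 t.numNodes) (h1 : 1 ∈ V)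
    (hmin : ∀ i ∈ V, nodeLE t i 1 → i = 1) : IsLevel t (upClosure t V) where
  subset_Icc := fun _ ⟨_, _, hij⟩ => (nodeLE_iff.1 hij).2.1
  isUpClosed := fun _ _ hjk ⟨i, hi, hij⟩ => ⟨i, hi, nodeLE_trans hij hjk⟩
  one_mem := subset_upClosure hV h1
  eq_one_of_nodeLE_one := by
    rintro j ⟨i, hi, hij⟩ hj1
    obtain rfl := hmin i hi (nodeLE_trans hij hj1)
    exact nodeLE_antisymm hj1 hij

theorem isLevel_upClosure_one (ht : 1 ≤ t.numNodes) : IsLevel t (upClosure t {1}) :=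
  isLevel_upClosure (by simpa using ht) rfl fun _ hi _ => hi

theorem isLevel_upClosure_of_tamariLE (huv : tamariLE u v) (hV : IsLevel v V) :
    IsLevel u (upClosure u V) :=
  isLevel_upClosure (huv.numNodes_eq ▸ hV.subset_Icc) hV.one_mem fun i hi hi1 =>
    hV.eq_one_of_nodeLE_one i hi
      (nodeLE_of_tamariLE_of_ge huv hi1 (nodeLE_iff.1 hi1).1.1)

theorem upClosure_one_subset (hsu : tamariLE s u) (hS : IsUpClosed s S) (h1 : 1 ∈ S) :
    upClosure u {1} ⊆ S := by
  rintro j ⟨_, rfl, h1j⟩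
  exact hS 1 j (nodeLE_of_tamariLE_of_le hsu h1j (nodeLE_iff.1 h1j).2.1.1) h1

/-- A node `j` above `i ∈ V` in `u` is an ancestor of `i` in `s` if `i ≤ j`, and in `v`
if `j ≤ i`. -/
theorem upClosure_subset (hsu : tamariLE s u) (huv : tamariLE u v) (hS : IsUpClosed s S)
    (hV : IsUpClosed v V) (hVS : V ⊆ S) : upClosure u V ⊆ S := by
  rintro j ⟨i, hi, hij⟩
  rcases le_total i j with h | h
  · exact hS i j (nodeLE_of_tamariLE_of_le hsu hij h) (hVS hi)
  · exact hVS (hV i j (nodeLE_of_tamariLE_of_ge huv hij h) hi)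

end Levels

theorem isLevel_leftComb {n : ℕ} (hn : 1 ≤ n) : IsLevel (leftComb n) (Set.Icc 1 n) where
  subset_Icc := by simp
  isUpClosed := fun _ _ hij _ => by simpa using (nodeLE_iff.1 hij).2.1
  one_mem := ⟨le_rfl, hn⟩
  eq_one_of_nodeLE_one := fun i hi h1 => by
    have := (nodeLE_iff.1 h1).2.2.2
    rw [rightSize_leftComb] at this
    exact le_antisymm this hi.1

end PBT

open PBT

theorem exists_isGLB_of_finite {α : Type*} [Preorder α] [Finite α]
    (hsup : ∀ a b : α, ∃ c, IsLUB {a, b} c) {s : Set α} (hs : (lowerBounds s).Nonempty) :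
    ∃ c, IsGLB s c := by
  have hdir : DirectedOn (· ≤ ·) (lowerBounds s) := fun p hp q hq => by
    obtain ⟨c, hc⟩ := hsup p q
    refine ⟨c, fun a ha => hc.2 ?_, hc.1 (Set.mem_insert p _),
      hc.1 (Set.mem_insert_of_mem p rfl)⟩
    rintro b (rfl | rfl)
    exacts [hp ha, hq ha]
  have := hs.to_subtype
  obtain ⟨m, hm⟩ :=
    (directedOn_iff_directed.1 hdir).finite_le (id : lowerBounds s → lowerBounds s)
  exact ⟨m, m.2, fun w hw => hm ⟨w, hw⟩⟩

namespace BLT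

variable {n : ℕ}

theorem isLevel (x : BLT n) : IsLevel x.t x.T :=
  ⟨by rw [x.hn]; exact x.hsub, x.hideal, x.hone, x.hmin⟩

def ofIsLevel (t : PBT) (hn : t.numNodes = n) {T : Set ℕ} (hT : IsLevel t T) : BLT n :=
  ⟨t, hn, T, hn ▸ hT.subset_Icc, hT.isUpClosed, hT.one_mem, hT.eq_one_of_nodeLE_one⟩

instance instFinite : Finite (BLT n) := by
  refine Finite.of_injective
    (fun x : BLT n => ((⟨x.t, x.hn⟩ : {t : PBT // t.numNodes = n}),
      (Fin.val : Fin (n + 1) → ℕ) ⁻¹' x.T)) ?_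
  rintro ⟨t, _, T, hsub, _, _, _⟩ ⟨t', _, T', hsub', _, _, _⟩ h
  simp only [Prod.mk.injEq, Subtype.mk.injEq] at h
  obtain ⟨rfl, hT⟩ := h
  obtain rfl : T = T' := Set.ext fun i => by
    by_cases hi : i ≤ n
    · exact Set.ext_iff.1 hT ⟨i, by omega⟩
    · exact iff_of_false (fun h => hi (hsub h).2) (fun h => hi (hsub' h).2)
  rfl

/-- The join marks the Tamari join `u` of the trees by the largest level of `u` inside
`x.T ∩ y.T`. -/
theorem exists_isLUB (x y : BLT n) : ∃ z, IsLUB {x, y} z := by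
  obtain ⟨u, hxu, hyu, hu⟩ := exists_tamari_join (x.hn.trans y.hn.symm)
  set 𝒲 := {W | IsLevel u W ∧ W ⊆ x.T ∩ y.T}
  have hone : upClosure u {1} ∈ 𝒲 :=
    ⟨isLevel_upClosure_one (hxu.numNodes_eq ▸ (x.isLevel.subset_Icc x.hone).2),
      Set.subset_inter (upClosure_one_subset hxu x.hideal x.hone)
        (upClosure_one_subset hyu y.hideal y.hone)⟩
  have hU : IsLevel u (⋃₀ 𝒲) := IsLevel.sUnion ⟨_, hone⟩ fun W hW => hW.1
  refine ⟨ofIsLevel u (hxu.numNodes_eq.symm.trans x.hn) hU, ?_, fun w hw => ?_⟩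
  · rintro z (rfl | rfl)
    · exact ⟨hxu, Set.sUnion_subset fun W hW => hW.2.trans Set.inter_subset_left⟩
    · exact ⟨hyu, Set.sUnion_subset fun W hW => hW.2.trans Set.inter_subset_right⟩
  obtain ⟨hxw, hwx⟩ := hw (Set.mem_insert x _)
  obtain ⟨hyw, hwy⟩ := hw (Set.mem_insert_of_mem x rfl)
  have huw := hu w.t hxw hyw
  refine ⟨huw, fun i hi => ⟨upClosure u w.T, ⟨isLevel_upClosure_of_tamariLE huw w.isLevel,
    Set.subset_inter (upClosure_subset hxu huw x.hideal w.hideal hwx)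
      (upClosure_subset hyu huw y.hideal w.hideal hwy)⟩, ?_⟩⟩
  exact subset_upClosure (huw.numNodes_eq ▸ w.isLevel.subset_Icc) hi

def bot (hn : 1 ≤ n) : BLT n :=
  ofIsLevel (leftComb n) (numNodes_leftComb n) (isLevel_leftComb hn)

theorem bot_le (hn : 1 ≤ n) (x : BLT n) : bot hn ≤ x := by
  have := leftComb_tamariLE x.t
  rw [x.hn] at this
  exact ⟨this, x.hsub⟩

end BLT

/-- The set of bi-leveled trees on `n` internal nodes, ordered by
`(s;S) ≤ (t;T)` iff `s ≤ t` in the Tamari order and `T ⊆ S`, is a lattice: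
every pair has a least upper bound and a greatest lower bound. -/
theorem BLT_lattice (n : ℕ) (x y : BLT n) :
    (∃ z : BLT n, IsLUB {x, y} z) ∧ (∃ z : BLT n, IsGLB {x, y} z) := by
  have hn : 1 ≤ n := (x.hsub x.hone).2
  refine ⟨BLT.exists_isLUB x y, exists_isGLB_of_finite BLT.exists_isLUB ⟨BLT.bot hn, ?_⟩⟩
  rintro z (rfl | rfl) <;> exact BLT.bot_le hn z
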